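/- Let L > 0 and suppose the sequences (α_k), (A_k) of nonnegative reals satisfy A_0 = 0, α_{k+1} = (1 + √(1 + 4·A_k·L_{k+1})) / (2·L_{k+1}) and A_{k+1} = A_k + α_{k+1}, where each L_{k+1} satisfies 0 < L_{k+1} ≤ L. Then for every N ≥ 1, A_N ≥ N² / (4·L). -/
import Mathlib


theorem stmt_1 (L : ℝ) (hL : 0 < L)
    (α A : ℕ → ℝ) (Lseq : ℕ → ℝ)
    (hαnonneg : ∀ k, 0 ≤ α k) (hAnonneg : ∀ k, 0 ≤ A k)
    (hA0 : A 0 = 0)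
    (hLseq : ∀ k, 0 < Lseq (k + 1) ∧ Lseq (k + 1) ≤ L)
    (hα : ∀ k, α (k + 1) =
      (1 + Real.sqrt (1 + 4 * A k * Lseq (k + 1))) / (2 * Lseq (k + 1)))
    (hA : ∀ k, A (k + 1) = A k + α (k + 1)) :
    ∀ N : ℕ, 1 ≤ N → A N ≥ (N : ℝ) ^ 2 / (4 * L) := by
  have key : ∀ N : ℕ, A N ≥ (N : ℝ) ^ 2 / (4 * L) := by
    intro N
    induction N with
    | zero => simp [hA0]
    | succ n ih =>
      obtain ⟨hLp, hLle⟩ := hLseq n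
      set L' := Lseq (n + 1) with hL'
      have hAn := hAnonneg n
      set s := Real.sqrt (A n * L') with hs
      have hs0 : 0 ≤ s := Real.sqrt_nonneg _
      have hs2 : s ^ 2 = A n * L' := Real.sq_sqrt (mul_nonneg hAn hLp.le)
      have hs1 : Real.sqrt (1 + 4 * A n * L') ≥ 2 * s := by
        have h4 : (2 : ℝ) * s = Real.sqrt (4 * (A n * L')) := by
          rw [show (4 : ℝ) = 2 ^ 2 by norm_num, Real.sqrt_mul (by positivity),
            Real.sqrt_sq (by norm_num : (0:ℝ) ≤ 2)]
        rw [h4]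
        apply Real.sqrt_le_sqrt
        nlinarith
      -- lower bound on s (multiplied form)
      have h1 : A n * (4 * L) ≥ (n : ℝ) ^ 2 := by
        have := ih
        rw [ge_iff_le, div_le_iff₀ (by positivity)] at this
        linarith
      have hsq : ((n : ℝ) * L') ^ 2 ≤ (2 * L * s) ^ 2 := by
        have ha : (n : ℝ) ^ 2 * (L * L') ≤ (A n * (4 * L)) * (L * L') :=
          mul_le_mul_of_nonneg_right h1 (by positivity)
        have hb : (n : ℝ) ^ 2 * L' * L' ≤ (n : ℝ) ^ 2 * (L * L') := by
          nlinarith [mul_nonneg (mul_nonneg (sq_nonneg ((n:ℝ))) hLp.le)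
            (sub_nonneg.2 hLle)]
        calc ((n : ℝ) * L') ^ 2 = (n : ℝ) ^ 2 * L' * L' := by ring
          _ ≤ (n : ℝ) ^ 2 * (L * L') := hb
          _ ≤ (A n * (4 * L)) * (L * L') := ha
          _ = (2 * L * s) ^ 2 := by
              rw [show (2 * L * s) ^ 2 = 4 * L ^ 2 * s ^ 2 from by ring, hs2]
              ring
      have hnn : (0 : ℝ) ≤ (n : ℝ) * L' := by positivity
      have hslb : (n : ℝ) * L' ≤ 2 * L * s :=
        (pow_le_pow_iff_left₀ hnn (by positivity) two_ne_zero).mp hsq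
      have hαlb : α (n + 1) ≥ ((n : ℝ) + 1) / (2 * L) := by
        rw [hα n]
        rw [ge_iff_le, div_le_div_iff₀ (by positivity) (by positivity)]
        have h2 : 2 * s * (2 * L) ≤ Real.sqrt (1 + 4 * A n * L') * (2 * L) :=
          mul_le_mul_of_nonneg_right hs1 (by positivity)
        have h3 : L' ≤ L := hLle
        nlinarith [h2, hslb, h3]
      have hAeq := hA n
      have : A (n + 1) ≥ (n : ℝ) ^ 2 / (4 * L) + ((n : ℝ) + 1) / (2 * L) := by
        rw [hAeq]; linarith
      have hfin : (n : ℝ) ^ 2 / (4 * L) + ((n : ℝ) + 1) / (2 * L)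
          ≥ ((n : ℝ) + 1) ^ 2 / (4 * L) := by
        rw [ge_iff_le, div_add_div _ _ (by positivity) (by positivity),
          div_le_div_iff₀ (by positivity) (by positivity)]
        nlinarith [hL]
      push_cast
      linarith
  intro N _
  exact key N
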